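/- arXiv:1605.05828 — 2 statements merged into one kernel-verified Lean document; each statement's English description precedes it below -/
import Mathlib

section
/- The logarithmic energy of the standard semicircular law equals −1/4: if σ is the probability measure on ℝ with density x ↦ (1/(2π))·√(4 − x²) on [−2, 2] (and 0 elsewhere), then ∫∫ log|x − y| dσ(x)dσ(y) = −1/4; equivalently, the free entropy χ(σ) = ∫∫ log|x−y| dσdσ + 3/4 + (1/2)·log(2π) equals (1/2)·log(2πe). -/
/-!
Substituting `y = 2 cos θ` turns `σ` into the measure `(2/π) sin² θ dθ` on `[0, π]`. For
`x = 2 cos α`, the factorization `2 cos α - 2 cos θ = 4 sin ((θ + α)/2) sin ((θ - α)/2)` and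
`2π`-periodicity reduce the potential `∫ log |x - y| dσ(y)` to the classical integrals
`∫₀^π log (sin u) du = -π log 2` and `∫₀^π log (sin u) cos 4u du = -π/4`, which give `x²/4 - 1/2`
on `[-2, 2]`. Since `σ` has second moment `1`, integrating the potential against `σ` gives `-1/4`.
-/

open MeasureTheory Real

/-- The standard semicircular law: the measure on `ℝ` with density
`x ↦ (1/(2π))·√(4 - x²)` (which vanishes outside `[-2, 2]`). -/
noncomputable def semicircleLaw : Measure ℝ :=
  (volume : Measure ℝ).withDensity
    (fun x => ENNReal.ofReal (1 / (2 * Real.pi) * Real.sqrt (4 - x ^ 2)))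

open Set

section

open intervalIntegral

lemma intervalIntegrable_log_mul_of_analyticAt {f g : ℝ → ℝ} (hf : ∀ x, AnalyticAt ℝ f x)
    (hg : Continuous g) (a b : ℝ) : IntervalIntegrable (fun x => log (f x) * g x) volume a b :=
  (AnalyticOnNhd.meromorphicOn fun x _ => hf x).intervalIntegrable_log.mul_continuousOn
    hg.continuousOn

theorem integral_log_sin_mul_cos_four_mul :
    ∫ u in 0..π, log (sin u) * cos (4 * u) = -(π / 4) := by
  -- Writing the boundary term `log (sin u) * sin (4 * u) / 4` as below makes `Φ` continuous on all
  -- of `ℝ` (`continuous_mul_log`), so the fundamental theorem applies on the closed interval.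
  let Φ : ℝ → ℝ := fun u =>
    sin u * log (sin u) * (cos u * cos (2 * u)) - (u + sin (2 * u) + sin (4 * u) / 4) / 4
  have hΦ : Continuous Φ := by
    have := continuous_mul_log.comp continuous_sin
    fun_prop
  have hderiv : ∀ u ∈ Ioo 0 π, HasDerivAt Φ (log (sin u) * cos (4 * u)) u := by
    intro u hu
    have hs : sin u ≠ 0 := (sin_pos_of_pos_of_lt_pi hu.1 hu.2).ne'
    have hmul (c : ℝ) : HasDerivAt (fun x => c * x) c u := hasDerivAt_const_mul c
    refine ((((hasDerivAt_mul_log hs).comp u (hasDerivAt_sin u)).mul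
      ((hasDerivAt_cos u).mul (hmul 2).cos)).sub
      ((((hasDerivAt_id u).add (hmul 2).sin).add ((hmul 4).sin.div_const 4)).div_const 4)
      ).congr_deriv ?_
    simp only [Pi.mul_apply, Function.comp_apply, show (4:ℝ) * u = 2 * (2 * u) by ring,
      cos_two_mul (2 * u), cos_two_mul u, sin_two_mul u]
    linear_combination log (sin u) * (1 - 6 * cos u ^ 2) * sin_sq_add_cos_sq u
  rw [integral_eq_sub_of_hasDerivAt_of_le pi_pos.le hΦ.continuousOn hderiv
    (intervalIntegrable_log_mul_of_analyticAt (by fun_prop) (by fun_prop) _ _)]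
  simp [Φ, show (4:ℝ) * π = (4:ℕ) * π by norm_num, sin_nat_mul_pi]

lemma ae_sin_half_add_ne_zero (β : ℝ) : ∀ᵐ θ : ℝ, sin ((θ + β) / 2) ≠ 0 := by
  refine ae_iff.mpr (measure_mono_null (fun θ hθ => ?_)
    ((countable_range fun n : ℤ => 2 * n * π - β).measure_zero volume))
  obtain ⟨n, hn⟩ := sin_eq_zero_iff.mp (not_not.mp hθ)
  exact ⟨n, by linarith⟩

lemma log_two_mul_cos_sub_two_mul_cos {α θ : ℝ} (h₁ : sin ((θ + α) / 2) ≠ 0)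
    (h₂ : sin ((θ - α) / 2) ≠ 0) :
    log (2 * cos α - 2 * cos θ) = log 4 + log (sin ((θ + α) / 2)) + log (sin ((θ - α) / 2)) := by
  have h : 2 * cos α - 2 * cos θ = 4 * sin ((θ + α) / 2) * sin ((θ - α) / 2) := by
    rw [← mul_sub, cos_sub_cos, show (α - θ) / 2 = -((θ - α) / 2) by ring, sin_neg,
      add_comm α θ]
    ring
  rw [h, log_mul (by positivity) h₂, log_mul (by norm_num) h₁]

lemma integral_log_sin_half_add_mul_sin_sq (β : ℝ) :
    ∫ θ in -π..π, log (sin ((θ + β) / 2)) * sin θ ^ 2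
      = 2 * ∫ u in 0..π, log (sin u) * sin (2 * u - β) ^ 2 := by
  let F : ℝ → ℝ := fun θ => log (sin ((θ + β) / 2)) * sin θ ^ 2
  have hF : Function.Periodic F (2 * π) := fun θ => by
    simp only [F, show (θ + 2 * π + β) / 2 = (θ + β) / 2 + π by ring, sin_add_pi,
      log_neg_eq_log, sin_add_two_pi]
  calc ∫ θ in -π..π, F θ = ∫ θ in -β..-β + 2 * π, F θ := by
        simpa [show -π + 2 * π = π by ring] using hF.intervalIntegral_add_eq (-π) (-β)
    _ = 2 * ∫ u in 0..π, F (2 * u - β) := by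
        rw [integral_comp_mul_sub F two_ne_zero β, smul_eq_mul, ← mul_assoc,
          mul_inv_cancel₀ two_ne_zero, one_mul]
        ring_nf
    _ = 2 * ∫ u in 0..π, log (sin u) * sin (2 * u - β) ^ 2 := by
        simp only [F, show ∀ u, (2 * u - β + β) / 2 = u by intro u; ring]

lemma integral_log_sin_mul_sin_sq_sub_add_sin_sq_add (α : ℝ) :
    (∫ u in 0..π, log (sin u) * sin (2 * u - α) ^ 2)
      + ∫ u in 0..π, log (sin u) * sin (2 * u + α) ^ 2 = -(π * log 2) + π / 4 * cos (2 * α) := by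
  have h : ∀ u, log (sin u) * sin (2 * u - α) ^ 2 + log (sin u) * sin (2 * u + α) ^ 2
      = log (sin u) - cos (2 * α) * (log (sin u) * cos (4 * u)) := fun u => by
    rw [sin_sq_eq_half_sub, sin_sq_eq_half_sub, show 2 * (2 * u - α) = 4 * u - 2 * α by ring,
      show 2 * (2 * u + α) = 4 * u + 2 * α by ring, cos_sub, cos_add]
    ring
  have hlog : IntervalIntegrable (fun u => log (sin u)) volume 0 π := intervalIntegrable_log_sin
  rw [← integral_add (intervalIntegrable_log_mul_of_analyticAt (by fun_prop) (by fun_prop) _ _)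
      (intervalIntegrable_log_mul_of_analyticAt (by fun_prop) (by fun_prop) _ _),
    integral_congr fun u _ => h u, integral_sub hlog
      ((intervalIntegrable_log_mul_of_analyticAt (by fun_prop) (by fun_prop) _ _).const_mul _),
    intervalIntegral.integral_const_mul, integral_log_sin_zero_pi,
    integral_log_sin_mul_cos_four_mul]
  ring

theorem integral_log_two_mul_cos_sub_mul_sin_sq (α : ℝ) :
    ∫ θ in 0..π, log (2 * cos α - 2 * cos θ) * sin θ ^ 2 = π / 4 * cos (2 * α) := by
  let F : ℝ → ℝ := fun θ => log (2 * cos α - 2 * cos θ) * sin θ ^ 2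
  have hF : IntervalIntegrable F volume (-π) π :=
    intervalIntegrable_log_mul_of_analyticAt (by fun_prop) (by fun_prop) _ _
  have hsymm : ∫ θ in -π..π, F θ = 2 * ∫ θ in 0..π, F θ := by
    have h := integral_comp_neg (a := 0) (b := π) F
    simp only [F, cos_neg, sin_neg, neg_sq, neg_zero] at h
    rw [← integral_add_adjacent_intervals (hF.mono_set ?_) (hF.mono_set ?_), ← h]
    · ring
    all_goals exact uIcc_subset_uIcc (by simp [pi_pos.le]) (by simp [pi_pos.le])
  have hsplit : ∫ θ in -π..π, F θ = ∫ θ in -π..π, (log 4 * sin θ ^ 2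
      + log (sin ((θ + α) / 2)) * sin θ ^ 2 + log (sin ((θ + -α) / 2)) * sin θ ^ 2) := by
    refine integral_congr_ae ?_
    filter_upwards [ae_sin_half_add_ne_zero α, ae_sin_half_add_ne_zero (-α)] with θ h₁ h₂ _
    rw [← sub_eq_add_neg] at h₂ ⊢
    simp only [F, log_two_mul_cos_sub_two_mul_cos h₁ h₂]
    ring
  have hsum := integral_log_sin_mul_sin_sq_sub_add_sin_sq_add α
  have h4 : IntervalIntegrable (fun θ => log 4 * sin θ ^ 2) volume (-π) π :=
    Continuous.intervalIntegrable (by fun_prop) _ _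
  rw [← mul_right_inj' (two_ne_zero' ℝ), ← hsymm, hsplit,
    integral_add
      (h4.add (intervalIntegrable_log_mul_of_analyticAt (by fun_prop) (by fun_prop) _ _))
      (intervalIntegrable_log_mul_of_analyticAt (by fun_prop) (by fun_prop) _ _),
    integral_add h4 (intervalIntegrable_log_mul_of_analyticAt (by fun_prop) (by fun_prop) _ _),
    intervalIntegral.integral_const_mul, integral_sin_sq, integral_log_sin_half_add_mul_sin_sq,
    integral_log_sin_half_add_mul_sin_sq]
  simp only [sin_neg, sin_pi, cos_neg, cos_pi, sub_neg_eq_add]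
  rw [show (4 : ℝ) = 2 ^ 2 by norm_num, log_pow]
  linear_combination 2 * hsum

end

noncomputable def semicircleDensity (x : ℝ) : ℝ := 1 / (2 * π) * √(4 - x ^ 2)

lemma semicircleLaw_eq_withDensity :
    semicircleLaw = volume.withDensity fun x => ENNReal.ofReal (semicircleDensity x) := rfl

lemma measurable_semicircleDensity : Measurable semicircleDensity := by
  unfold semicircleDensity; fun_prop

lemma semicircleDensity_nonneg (x : ℝ) : 0 ≤ semicircleDensity x := by
  unfold semicircleDensity; positivity

lemma semicircleDensity_eq_zero {x : ℝ} (hx : x ∉ Icc (-2) 2) : semicircleDensity x = 0 := by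
  have h : 4 - x ^ 2 ≤ 0 := by
    rw [mem_Icc, not_and_or, not_le, not_le] at hx
    rcases hx with hx | hx <;> nlinarith
  rw [semicircleDensity, sqrt_eq_zero_of_nonpos h, mul_zero]

lemma semicircleDensity_two_mul_cos {θ : ℝ} (hθ : θ ∈ Icc 0 π) :
    semicircleDensity (2 * cos θ) = sin θ / π := by
  have h : 4 - (2 * cos θ) ^ 2 = (2 * sin θ) ^ 2 := by
    linear_combination -4 * sin_sq_add_cos_sq θ
  rw [semicircleDensity, h, sqrt_sq (by nlinarith [sin_nonneg_of_mem_Icc hθ])]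
  field_simp

lemma image_two_mul_cos_Icc : (fun θ => 2 * cos θ) '' Icc 0 π = Icc (-2) 2 := by
  rw [← image_image (2 * ·) cos, bijOn_cos.image_eq, image_mul_left_Icc (by norm_num) (by norm_num)]
  norm_num

lemma injOn_two_mul_cos : InjOn (fun θ => 2 * cos θ) (Icc 0 π) :=
  (mul_right_injective₀ two_ne_zero).comp_injOn injOn_cos

lemma abs_deriv_smul_semicircleDensity_two_mul_cos (g : ℝ → ℝ) :
    EqOn (fun θ => |2 * -sin θ| • (semicircleDensity (2 * cos θ) * g (2 * cos θ)))
      (fun θ => 2 / π * (g (2 * cos θ) * sin θ ^ 2)) (Icc 0 π) := fun θ hθ => by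
  simp only [smul_eq_mul, semicircleDensity_two_mul_cos hθ, abs_mul, abs_neg, abs_two,
    abs_of_nonneg (sin_nonneg_of_mem_Icc hθ)]
  field_simp

theorem integral_semicircleLaw (g : ℝ → ℝ) :
    ∫ x, g x ∂semicircleLaw = 2 / π * ∫ θ in 0..π, g (2 * cos θ) * sin θ ^ 2 := by
  have hsubst := integral_image_eq_integral_abs_deriv_smul measurableSet_Icc
    (fun θ _ => ((hasDerivAt_cos θ).const_mul 2).hasDerivWithinAt) injOn_two_mul_cos
    (fun x => semicircleDensity x * g x)
  rw [image_two_mul_cos_Icc] at hsubst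
  calc ∫ x, g x ∂semicircleLaw = ∫ x, semicircleDensity x * g x := by
        rw [semicircleLaw_eq_withDensity, integral_withDensity_eq_integral_toReal_smul
          measurable_semicircleDensity.ennreal_ofReal (ae_of_all _ fun _ => ENNReal.ofReal_lt_top)]
        simp only [smul_eq_mul, ENNReal.toReal_ofReal (semicircleDensity_nonneg _)]
    _ = ∫ x in Icc (-2) 2, semicircleDensity x * g x :=
        (setIntegral_eq_integral_of_forall_compl_eq_zero fun x hx => by
          rw [semicircleDensity_eq_zero hx, zero_mul]).symm
    _ = ∫ θ in Icc 0 π, 2 / π * (g (2 * cos θ) * sin θ ^ 2) :=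
        hsubst.trans <| setIntegral_congr_fun measurableSet_Icc <|
          abs_deriv_smul_semicircleDensity_two_mul_cos g
    _ = 2 / π * ∫ θ in 0..π, g (2 * cos θ) * sin θ ^ 2 := by
        rw [integral_const_mul, integral_Icc_eq_integral_Ioc,
          ← intervalIntegral.integral_of_le pi_pos.le]

theorem integrable_semicircleLaw_iff (g : ℝ → ℝ) :
    Integrable g semicircleLaw ↔
      IntervalIntegrable (fun θ => g (2 * cos θ) * sin θ ^ 2) volume 0 π := by
  have hsubst := integrableOn_image_iff_integrableOn_abs_deriv_smul measurableSet_Icc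
    (fun θ _ => ((hasDerivAt_cos θ).const_mul 2).hasDerivWithinAt) injOn_two_mul_cos
    (fun x => semicircleDensity x * g x)
  rw [image_two_mul_cos_Icc] at hsubst
  have hsupp : Function.support (fun x => semicircleDensity x * g x) ⊆ Icc (-2) 2 :=
    fun x hx => by_contra fun h => hx (by simp [semicircleDensity_eq_zero h])
  calc Integrable g semicircleLaw ↔ Integrable (fun x => semicircleDensity x * g x) := by
        rw [semicircleLaw_eq_withDensity, integrable_withDensity_iff
          measurable_semicircleDensity.ennreal_ofReal (ae_of_all _ fun _ => ENNReal.ofReal_lt_top)]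
        simp_rw [ENNReal.toReal_ofReal (semicircleDensity_nonneg _), mul_comm (g _)]
    _ ↔ IntegrableOn (fun x => semicircleDensity x * g x) (Icc (-2) 2) :=
        (integrableOn_iff_integrable_of_support_subset hsupp).symm
    _ ↔ IntegrableOn (fun θ => 2 / π * (g (2 * cos θ) * sin θ ^ 2)) (Icc 0 π) :=
        hsubst.trans <|
          integrableOn_congr_fun (abs_deriv_smul_semicircleDensity_two_mul_cos g) measurableSet_Icc
    _ ↔ IntervalIntegrable (fun θ => g (2 * cos θ) * sin θ ^ 2) volume 0 π := by
        rw [IntegrableOn, integrable_const_mul_iff (by simp [pi_ne_zero]),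
          intervalIntegrable_iff_integrableOn_Icc_of_le pi_pos.le, IntegrableOn]

lemma Continuous.integrable_semicircleLaw {g : ℝ → ℝ} (hg : Continuous g) :
    Integrable g semicircleLaw :=
  (integrable_semicircleLaw_iff g).mpr (Continuous.intervalIntegrable (by fun_prop) _ _)

instance isProbabilityMeasure_semicircleLaw : IsProbabilityMeasure semicircleLaw := by
  have hone : Integrable (fun _ => (1 : ℝ)) semicircleLaw :=
    continuous_const.integrable_semicircleLaw
  have := (integrable_const_iff.mp hone).resolve_left one_ne_zero
  have h := integral_semicircleLaw fun _ => 1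
  simp only [integral_const, smul_eq_mul, mul_one, one_mul, integral_sin_sq, sin_zero, sin_pi] at h
  refine ⟨(ENNReal.toReal_eq_one_iff _).mp ?_⟩
  rw [← measureReal_def, h]
  field_simp
  ring

lemma ae_semicircleLaw_mem_Icc : ∀ᵐ x ∂semicircleLaw, x ∈ Icc (-2) 2 := by
  rw [semicircleLaw_eq_withDensity, ae_withDensity_iff measurable_semicircleDensity.ennreal_ofReal]
  refine ae_of_all _ fun x hx => by_contra fun h => hx ?_
  rw [semicircleDensity_eq_zero h, ENNReal.ofReal_zero]

lemma integral_sq_semicircleLaw : ∫ x, x ^ 2 ∂semicircleLaw = 1 := by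
  have h : ∀ θ, (2 * cos θ) ^ 2 * sin θ ^ 2 = 4 * (sin θ ^ 2 * cos θ ^ 2) := fun θ => by ring
  rw [integral_semicircleLaw, intervalIntegral.integral_congr fun θ _ => h θ,
    intervalIntegral.integral_const_mul, integral_sin_sq_mul_cos_sq]
  simp only [mul_zero, sin_zero, sub_zero, show (4 : ℝ) * π = (4 : ℕ) * π by norm_num,
    sin_nat_mul_pi]
  field_simp
  ring

theorem integrable_log_abs_sub_semicircleLaw (x : ℝ) :
    Integrable (fun y => log |x - y|) semicircleLaw := by
  rw [integrable_semicircleLaw_iff]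
  simp only [log_abs]
  exact intervalIntegrable_log_mul_of_analyticAt (by fun_prop) (by fun_prop) _ _

theorem integral_log_abs_sub_semicircleLaw {x : ℝ} (hx : x ∈ Icc (-2) 2) :
    ∫ y, log |x - y| ∂semicircleLaw = x ^ 2 / 4 - 1 / 2 := by
  obtain ⟨α, -, rfl⟩ : x ∈ (fun θ => 2 * cos θ) '' Icc 0 π := image_two_mul_cos_Icc ▸ hx
  simp only [integral_semicircleLaw, log_abs, integral_log_two_mul_cos_sub_mul_sin_sq, cos_two_mul]
  field_simp
  ring

lemma abs_log_le_two_mul_log_sub_log {t c : ℝ} (ht : 0 ≤ t) (htc : t ≤ c) (hc : 1 ≤ c) :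
    |log t| ≤ 2 * log c - log t := by
  have hlogc : 0 ≤ log c := log_nonneg hc
  rcases ht.eq_or_lt with rfl | ht
  · simpa using hlogc
  have := log_le_log ht htc
  rw [abs_le]
  constructor <;> linarith

theorem integrable_log_abs_sub_prod_semicircleLaw :
    Integrable (fun z : ℝ × ℝ => log |z.1 - z.2|) (semicircleLaw.prod semicircleLaw) := by
  have hmeas : AEStronglyMeasurable (fun z : ℝ × ℝ => log |z.1 - z.2|)
      (semicircleLaw.prod semicircleLaw) := (by fun_prop : Measurable _).aestronglyMeasurable
  refine (integrable_prod_iff hmeas).mpr ⟨ae_of_all _ integrable_log_abs_sub_semicircleLaw, ?_⟩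
  refine (integrable_const (2 * log 4 + 1 / 2)).mono' hmeas.norm.integral_prod_right' ?_
  filter_upwards [ae_semicircleLaw_mem_Icc] with x hx
  have hle : ∀ᵐ y ∂semicircleLaw, ‖log |x - y|‖ ≤ 2 * log 4 - log |x - y| := by
    filter_upwards [ae_semicircleLaw_mem_Icc] with y hy
    exact abs_log_le_two_mul_log_sub_log (abs_nonneg _)
      (abs_le.mpr ⟨by linarith [hx.1, hy.2], by linarith [hx.2, hy.1]⟩) (by norm_num)
  rw [norm_of_nonneg (integral_nonneg fun _ => norm_nonneg _)]
  calc ∫ y, ‖log |x - y|‖ ∂semicircleLaw ≤ ∫ y, (2 * log 4 - log |x - y|) ∂semicircleLaw :=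
        integral_mono_ae (integrable_log_abs_sub_semicircleLaw x).norm
          ((integrable_const _).sub (integrable_log_abs_sub_semicircleLaw x)) hle
    _ = 2 * log 4 - (x ^ 2 / 4 - 1 / 2) := by
        rw [integral_sub (integrable_const _) (integrable_log_abs_sub_semicircleLaw x),
          integral_const, probReal_univ, one_smul, integral_log_abs_sub_semicircleLaw hx]
    _ ≤ 2 * log 4 + 1 / 2 := by nlinarith [sq_nonneg x]

/-- The logarithmic energy of the standard semicircular law equals `-1/4`;
equivalently the free entropy `χ(σ)` equals `(1/2)·log(2πe)`. -/
theorem semicircle_log_energy :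
    (∫ z : ℝ × ℝ, Real.log |z.1 - z.2| ∂(semicircleLaw.prod semicircleLaw)) = -(1 / 4)
    ∧ (∫ z : ℝ × ℝ, Real.log |z.1 - z.2| ∂(semicircleLaw.prod semicircleLaw))
        + 3 / 4 + 1 / 2 * Real.log (2 * Real.pi)
      = 1 / 2 * Real.log (2 * Real.pi * Real.exp 1) := by
  have henergy : ∫ z : ℝ × ℝ, log |z.1 - z.2| ∂(semicircleLaw.prod semicircleLaw) = -(1 / 4) :=
    calc _ = ∫ x, ∫ y, log |x - y| ∂semicircleLaw ∂semicircleLaw :=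
          integral_prod _ integrable_log_abs_sub_prod_semicircleLaw
      _ = ∫ x, (x ^ 2 / 4 - 1 / 2) ∂semicircleLaw :=
          integral_congr_ae <| ae_semicircleLaw_mem_Icc.mono fun x hx =>
            integral_log_abs_sub_semicircleLaw hx
      _ = -(1 / 4) := by
          rw [integral_sub ((continuous_pow 2).div_const 4).integrable_semicircleLaw
            (integrable_const _), integral_div, integral_sq_semicircleLaw, integral_const,
            probReal_univ, one_smul]
          norm_num
  refine ⟨henergy, ?_⟩
  rw [henergy, log_mul (by positivity) (exp_ne_zero 1), log_exp]
  ring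
end

section
/- One-dimensional form of the paper's proposition that monotone transformations increase relative free entropy: let V be a convex real polynomial and let ν be a compactly supported Borel probability measure on ℝ with ∫∫ |log|x−y|| dν(x)dν(y) < ∞ whose law is the free Gibbs state with potential V, i.e. ∫ V'(x)·p(x) dν(x) = ∫∫ Δp(x,y) dν(x)dν(y) for every real polynomial p. Let F be a real polynomial with F'(x) > 0 for all x ∈ ℝ (so F is a strictly increasing bijection of ℝ). Then ∫ V(F(x)) dν(x) − ∫∫ log|F(x) − F(y)| dν(x)dν(y) ≥ ∫ V(x) dν(x) − ∫∫ log|x − y| dν(x)dν(y); that is, the relative free entropy of the pushforward F_*ν with respect to V is at least that of ν. -/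
/-!
Write `F(x) - F(y) = ΔF(x,y) (x - y)` with `ΔF > 0`. Off the diagonal,
`log|F(x) - F(y)| = log|x - y| + log ΔF(x,y) ≤ log|x - y| + ΔF(x,y) - 1`, and the Gibbs relation
for `p = F - X` turns `∫∫ (ΔF - 1)` into `∫ V'(x) (F(x) - x) dν`, which is at most
`∫ V ∘ F dν - ∫ V dν` by convexity of `V`.

The diagonal matters (there both logarithms are `log 0 = 0`), so we show that `ν` has no atoms:
if `p' = (1 - (t - a)²/L²)^n` and `p(a) = 0`, then `p' ≥ 0` on a support interval `I`,
`p'(a) = 1` and `sup_I |p| ≤ ∫_I p' → 0` by dominated convergence, so the Gibbs relation gives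
`ν{a}² ≤ ∫∫ Δp = ∫ V' p → 0`.
-/

open MeasureTheory Real

/-- The difference-quotient kernel of a real polynomial:
`dq p x y = (p(x) - p(y))/(x - y)` for `x ≠ y`, and `p'(x)` on the diagonal. -/
noncomputable def dq (p : Polynomial ℝ) (x y : ℝ) : ℝ :=
  if x = y then (Polynomial.derivative p).eval x
  else (p.eval x - p.eval y) / (x - y)

open Polynomial Set Filter Topology

lemma dq_self (p : ℝ[X]) (x : ℝ) : dq p x x = p.derivative.eval x := if_pos rfl

lemma dq_of_ne (p : ℝ[X]) {x y : ℝ} (h : x ≠ y) : dq p x y = (p.eval x - p.eval y) / (x - y) :=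
  if_neg h

lemma dq_comm (p : ℝ[X]) (x y : ℝ) : dq p x y = dq p y x := by
  rcases eq_or_ne x y with rfl | h
  · rfl
  · rw [dq_of_ne p h, dq_of_ne p h.symm, ← neg_div_neg_eq, neg_sub, neg_sub]

lemma dq_sub (p q : ℝ[X]) (x y : ℝ) : dq (p - q) x y = dq p x y - dq q x y := by
  rcases eq_or_ne x y with rfl | h
  · simp only [dq_self, derivative_sub, eval_sub]
  · simp only [dq_of_ne _ h, eval_sub]
    ring

lemma dq_X (x y : ℝ) : dq X x y = 1 := by
  rcases eq_or_ne x y with rfl | h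
  · simp [dq_self]
  · rw [dq_of_ne X h, eval_X, eval_X, div_self (sub_ne_zero.mpr h)]

lemma measurable_dq (p : ℝ[X]) : Measurable fun z : ℝ × ℝ => dq p z.1 z.2 :=
  Measurable.ite (measurableSet_eq_fun measurable_fst measurable_snd)
    (p.derivative.continuous.measurable.comp measurable_fst)
    (((p.continuous.comp continuous_fst).sub (p.continuous.comp continuous_snd)).measurable.div
      (continuous_fst.sub continuous_snd).measurable)

lemma exists_mem_uIcc_dq_eq (p : ℝ[X]) (x y : ℝ) :
    ∃ c ∈ uIcc x y, dq p x y = p.derivative.eval c := by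
  wlog hxy : x ≤ y generalizing x y
  · obtain ⟨c, hc, h⟩ := this y x (le_of_not_ge hxy)
    exact ⟨c, uIcc_comm x y ▸ hc, dq_comm p x y ▸ h⟩
  rcases hxy.eq_or_lt with rfl | hlt
  · exact ⟨x, by simp, dq_self p x⟩
  obtain ⟨c, hc, h⟩ := exists_hasDerivAt_eq_slope (fun t => p.eval t)
    (fun t => p.derivative.eval t) hlt p.continuous.continuousOn (fun t _ => p.hasDerivAt t)
  refine ⟨c, uIcc_of_le hxy ▸ Ioo_subset_Icc_self hc, ?_⟩
  rw [dq_of_ne p hlt.ne, h, ← neg_div_neg_eq, neg_sub, neg_sub]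

lemma dq_mem_of_derivative_mem {p : ℝ[X]} {s t : Set ℝ} [s.OrdConnected]
    (h : ∀ c ∈ s, p.derivative.eval c ∈ t) {x y : ℝ} (hx : x ∈ s) (hy : y ∈ s) :
    dq p x y ∈ t := by
  obtain ⟨c, hc, h'⟩ := exists_mem_uIcc_dq_eq p x y
  exact h' ▸ h c (Set.OrdConnected.uIcc_subset ‹_› hx hy hc)

lemma dq_pos {p : ℝ[X]} (hp : ∀ x, 0 < p.derivative.eval x) (x y : ℝ) : 0 < dq p x y :=
  dq_mem_of_derivative_mem (s := univ) (t := Ioi 0) (fun c _ => hp c) trivial trivial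

lemma log_abs_eval_sub_eval (p : ℝ[X]) {x y : ℝ} (hxy : x ≠ y) (hp : dq p x y ≠ 0) :
    log |p.eval x - p.eval y| = log |x - y| + log (dq p x y) := by
  have h : p.eval x - p.eval y = dq p x y * (x - y) := by
    rw [dq_of_ne p hxy, div_mul_cancel₀ _ (sub_ne_zero.2 hxy)]
  rw [h, Real.log_abs, Real.log_mul hp (sub_ne_zero.2 hxy), ← Real.log_abs (x - y), add_comm]

lemma ae_mem_prod_of_ae_mem {α β : Type*} [MeasurableSpace α] [MeasurableSpace β]
    {μ : Measure α} {ν : Measure β} {s : Set α} {t : Set β} (hs : ∀ᵐ x ∂μ, x ∈ s)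
    (ht : ∀ᵐ y ∂ν, y ∈ t) : ∀ᵐ z ∂μ.prod ν, z ∈ s ×ˢ t :=
  (Measure.quasiMeasurePreserving_fst.ae hs).and (Measure.quasiMeasurePreserving_snd.ae ht)

lemma ae_fst_ne_snd {α : Type*} [MeasurableSpace α] [MeasurableEq α] {μ ν : Measure α}
    [SFinite ν] [NullSingletonClass ν] : ∀ᵐ z ∂μ.prod ν, z.1 ≠ z.2 :=
  (Measure.ae_prod_iff_ae_ae measurableSet_diagonal.compl).2
    (ae_of_all _ fun x => (ν.ae_ne x).mono fun _ h => h.symm)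

section SupportedOnInterval

variable {ν : Measure ℝ} [IsFiniteMeasure ν] {lo hi : ℝ}

lemma Continuous.integrable_of_ae_mem_Icc {f : ℝ → ℝ} (hf : Continuous f)
    (hI : ∀ᵐ x ∂ν, x ∈ Icc lo hi) : Integrable f ν := by
  obtain ⟨C, hC⟩ := isCompact_Icc.exists_bound_of_continuousOn hf.continuousOn
  exact .of_bound hf.aestronglyMeasurable C (hI.mono hC)

lemma integrable_comp_dq (hI : ∀ᵐ x ∂ν, x ∈ Icc lo hi) (p : ℝ[X]) {g : ℝ → ℝ}
    (hg : Measurable g) (hgc : ContinuousOn (fun t => g (p.derivative.eval t)) (Icc lo hi)) :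
    Integrable (fun z : ℝ × ℝ => g (dq p z.1 z.2)) (ν.prod ν) := by
  obtain ⟨C, hC⟩ := isCompact_Icc.exists_bound_of_continuousOn hgc
  refine .of_bound (hg.comp (measurable_dq p)).aestronglyMeasurable C ?_
  filter_upwards [ae_mem_prod_of_ae_mem hI hI] with z ⟨h1, h2⟩
  exact dq_mem_of_derivative_mem (t := {u | ‖g u‖ ≤ C}) hC h1 h2

lemma integrable_dq (hI : ∀ᵐ x ∂ν, x ∈ Icc lo hi) (p : ℝ[X]) :
    Integrable (fun z : ℝ × ℝ => dq p z.1 z.2) (ν.prod ν) :=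
  integrable_comp_dq hI p measurable_id p.derivative.continuous.continuousOn

lemma measureReal_singleton_sq_mul_le_integral_dq (hI : ∀ᵐ x ∂ν, x ∈ Icc lo hi) {p : ℝ[X]}
    (hp : ∀ t ∈ Icc lo hi, 0 ≤ p.derivative.eval t) (a : ℝ) :
    ν.real {a} ^ 2 * p.derivative.eval a ≤ ∫ z, dq p z.1 z.2 ∂ν.prod ν := by
  have hnonneg : 0 ≤ᵐ[ν.prod ν] fun z => dq p z.1 z.2 := by
    filter_upwards [ae_mem_prod_of_ae_mem hI hI] with z ⟨h1, h2⟩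
    exact dq_mem_of_derivative_mem (t := Ici 0) hp h1 h2
  calc ν.real {a} ^ 2 * p.derivative.eval a = ∫ z in {(a, a)}, dq p z.1 z.2 ∂ν.prod ν := by
        rw [integral_singleton, ← singleton_prod_singleton, measureReal_prod_prod, dq_self,
          smul_eq_mul, sq]
    _ ≤ _ := setIntegral_le_integral (integrable_dq hI p) hnonneg

end SupportedOnInterval

lemma exists_derivative_eq {K : Type*} [Field K] [CharZero K] (p : K[X]) :
    ∃ q : K[X], derivative q = p := by
  induction p using Polynomial.induction_on' with
  | add p q hp hq =>
    obtain ⟨p', rfl⟩ := hp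
    obtain ⟨q', rfl⟩ := hq
    exact ⟨p' + q', derivative_add⟩
  | monomial n a =>
    refine ⟨monomial (n + 1) (a / (n + 1)), ?_⟩
    rw [derivative_monomial, Nat.add_sub_cancel]
    congr 1
    push_cast
    field_simp

lemma tendsto_intervalIntegral_pow_atTop_zero {f : ℝ → ℝ} {lo hi a : ℝ} (hf : Measurable f)
    (hf0 : ∀ t ∈ uIcc lo hi, 0 ≤ f t) (hf1 : ∀ t ∈ uIcc lo hi, f t ≤ 1)
    (hfa : ∀ t ∈ uIcc lo hi, t ≠ a → f t < 1) :
    Tendsto (fun n : ℕ => ∫ t in lo..hi, f t ^ n) atTop (𝓝 0) := by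
  have hlim := intervalIntegral.tendsto_integral_filter_of_dominated_convergence (a := lo) (b := hi)
    (μ := volume) (l := atTop) (F := fun n t => f t ^ n) (f := 0) (fun _ => 1)
    (Eventually.of_forall fun n => (hf.pow_const n).aestronglyMeasurable)
    (Eventually.of_forall fun n => ae_of_all _ fun t ht => by
      have ht' := uIoc_subset_uIcc ht
      rw [Real.norm_eq_abs, abs_of_nonneg (pow_nonneg (hf0 t ht') n)]
      exact pow_le_one₀ (hf0 t ht') (hf1 t ht'))
    intervalIntegrable_const
    (by
      filter_upwards [volume.ae_ne a] with t hta ht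
      have ht' := uIoc_subset_uIcc ht
      exact tendsto_pow_atTop_nhds_zero_of_lt_one (hf0 t ht') (hfa t ht' hta))
  simpa using hlim

lemma abs_eval_sub_eval_le_integral_derivative {p : ℝ[X]} {lo hi : ℝ}
    (hp : ∀ t ∈ Icc lo hi, 0 ≤ p.derivative.eval t) {x y : ℝ} (hx : x ∈ Icc lo hi)
    (hy : y ∈ Icc lo hi) : |p.eval x - p.eval y| ≤ ∫ t in lo..hi, p.derivative.eval t := by
  have hmono : MonotoneOn (fun t => p.eval t) (Icc lo hi) :=
    monotoneOn_of_deriv_nonneg (convex_Icc lo hi) p.continuous.continuousOn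
      p.differentiable.differentiableOn
      (fun t ht => by rw [Polynomial.deriv]; exact hp t (interior_subset ht))
  have hlohi : lo ≤ hi := hx.1.trans hx.2
  rw [intervalIntegral.integral_eq_sub_of_hasDerivAt (fun t _ => p.hasDerivAt t)
    (p.derivative.continuous.intervalIntegrable _ _), abs_sub_le_iff]
  have bounds : ∀ z ∈ Icc lo hi, p.eval lo ≤ p.eval z ∧ p.eval z ≤ p.eval hi := fun z hz =>
    ⟨hmono (left_mem_Icc.2 hlohi) hz hz.1, hmono hz (right_mem_Icc.2 hlohi) hz.2⟩
  constructor <;> linarith [bounds x hx, bounds y hy]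

lemma exists_peak_polynomial {lo hi a ε : ℝ} (ha : a ∈ Icc lo hi) (hε : 0 < ε) :
    ∃ p : ℝ[X], (∀ t ∈ Icc lo hi, 0 ≤ p.derivative.eval t) ∧ p.derivative.eval a = 1 ∧
      ∀ t ∈ Icc lo hi, |p.eval t| ≤ ε := by
  have hlohi : lo ≤ hi := ha.1.trans ha.2
  set L := hi - lo + 1
  set U : ℝ[X] := 1 - C (L ^ 2)⁻¹ * (X - C a) ^ 2
  have hU : ∀ t, U.eval t = 1 - (t - a) ^ 2 / L ^ 2 := fun t => by simp [U, div_eq_inv_mul]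
  have hU0 : ∀ t ∈ Icc lo hi, 0 ≤ U.eval t := by
    intro t ht
    have hdist : |t - a| ≤ |L| := by
      rw [abs_of_pos (by linarith : 0 < L), abs_sub_le_iff]
      constructor <;> linarith [ht.1, ht.2, ha.1, ha.2]
    rw [hU, sub_nonneg, div_le_one (by positivity)]
    exact sq_le_sq.2 hdist
  have hU1 : ∀ t, U.eval t ≤ 1 := fun t => by
    rw [hU]; linarith [div_nonneg (sq_nonneg (t - a)) (sq_nonneg L)]
  have hUa : ∀ t, t ≠ a → U.eval t < 1 := fun t hta => by
    rw [hU, sub_lt_self_iff]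
    exact div_pos (pow_pos (abs_pos.2 (sub_ne_zero.2 hta)) 2 |>.trans_eq (sq_abs _))
      (by positivity)
  obtain ⟨n, hn⟩ := ((tendsto_intervalIntegral_pow_atTop_zero U.continuous.measurable
    (uIcc_of_le hlohi ▸ hU0) (fun t _ => hU1 t) (fun t _ => hUa t)).eventually
    (ge_mem_nhds hε)).exists
  obtain ⟨q, hq⟩ := exists_derivative_eq (U ^ n)
  have hp' : derivative (q - C (q.eval a)) = U ^ n := by
    rw [derivative_sub, derivative_C, sub_zero, hq]
  have hp'0 : ∀ t ∈ Icc lo hi, 0 ≤ (derivative (q - C (q.eval a))).eval t := fun t ht => by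
    rw [hp', eval_pow]; exact pow_nonneg (hU0 t ht) n
  refine ⟨q - C (q.eval a), hp'0, by rw [hp', eval_pow, hU, sub_self]; simp, fun t ht => ?_⟩
  have h := abs_eval_sub_eval_le_integral_derivative hp'0 ht ha
  simp only [hp', eval_pow, eval_sub, eval_C, sub_self, sub_zero] at h
  simpa only [eval_sub, eval_C] using h.trans hn

def IsFreeGibbsState (V : ℝ[X]) (ν : Measure ℝ) : Prop :=
  ∀ p : ℝ[X], ∫ x, V.derivative.eval x * p.eval x ∂ν = ∫ z : ℝ × ℝ, dq p z.1 z.2 ∂ν.prod ν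

theorem IsFreeGibbsState.nullSingletonClass {V : ℝ[X]} {ν : Measure ℝ} [IsProbabilityMeasure ν]
    (hV : IsFreeGibbsState V ν) {lo hi : ℝ} (hI : ∀ᵐ x ∂ν, x ∈ Icc lo hi) :
    NullSingletonClass ν where
  measure_singleton a := by
    by_cases ha : a ∈ Icc lo hi
    swap
    · exact measure_mono_null (singleton_subset_iff.2 ha) (ae_iff.1 hI)
    obtain ⟨M, hM⟩ := isCompact_Icc.exists_bound_of_continuousOn
      (V.derivative.continuous.continuousOn (s := Icc lo hi))
    have hM0 : 0 ≤ M := (norm_nonneg _).trans (hM a ha)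
    suffices ν.real {a} ^ 2 ≤ 0 from
      (measureReal_eq_zero_iff).1 (pow_eq_zero_iff two_ne_zero |>.1
        (le_antisymm this (sq_nonneg _)))
    refine le_of_forall_pos_le_add fun ε hε => ?_
    obtain ⟨p, hp0, hpa, hpε⟩ := exists_peak_polynomial ha (div_pos hε (by linarith : 0 < M + 1))
    have hVp : ‖∫ x, V.derivative.eval x * p.eval x ∂ν‖ ≤ M * (ε / (M + 1)) := by
      have hbound : ∀ᵐ x ∂ν, ‖V.derivative.eval x * p.eval x‖ ≤ M * (ε / (M + 1)) := by
        filter_upwards [hI] with x hx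
        rw [norm_mul]
        exact mul_le_mul (hM x hx) (hpε x hx) (norm_nonneg _) hM0
      simpa using norm_integral_le_of_norm_le_const hbound
    calc ν.real {a} ^ 2 = ν.real {a} ^ 2 * p.derivative.eval a := by rw [hpa, mul_one]
      _ ≤ ∫ z, dq p z.1 z.2 ∂ν.prod ν := measureReal_singleton_sq_mul_le_integral_dq hI hp0 a
      _ = ∫ x, V.derivative.eval x * p.eval x ∂ν := (hV p).symm
      _ ≤ M * (ε / (M + 1)) := (le_abs_self _).trans hVp
      _ ≤ 0 + ε := by
        rw [zero_add, mul_div_assoc']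
        exact div_le_of_le_mul₀ (by linarith) hε.le (by nlinarith)

lemma ConvexOn.deriv_mul_sub_le {S : Set ℝ} {f : ℝ → ℝ} (hf : ConvexOn ℝ S f) {x y : ℝ}
    (hx : x ∈ S) (hy : y ∈ S) (hd : DifferentiableAt ℝ f x) :
    deriv f x * (y - x) ≤ f y - f x := by
  rcases lt_trichotomy y x with hyx | rfl | hxy
  · have h := hf.slope_le_deriv hy hx hyx hd
    rw [slope_def_field, div_le_iff₀ (sub_pos.2 hyx)] at h
    linarith
  · simp
  · have h := hf.deriv_le_slope hx hy hxy hd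
    rwa [slope_def_field, le_div_iff₀ (sub_pos.2 hxy)] at h

lemma integral_log_abs_sub_eval_le {ν : Measure ℝ} [IsFiniteMeasure ν] [NullSingletonClass ν]
    {lo hi : ℝ} (hI : ∀ᵐ x ∂ν, x ∈ Icc lo hi) {F : ℝ[X]} (hF : ∀ x, 0 < F.derivative.eval x)
    (hlog : Integrable (fun z : ℝ × ℝ => log |z.1 - z.2|) (ν.prod ν)) :
    ∫ z, log |F.eval z.1 - F.eval z.2| ∂ν.prod ν
      ≤ ∫ z, log |z.1 - z.2| ∂ν.prod ν + ∫ z, (dq F z.1 z.2 - 1) ∂ν.prod ν := by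
  have hlogdq : Integrable (fun z : ℝ × ℝ => log (dq F z.1 z.2)) (ν.prod ν) :=
    integrable_comp_dq hI F Real.measurable_log
      (F.derivative.continuous.continuousOn.log fun t _ => (hF t).ne')
  calc ∫ z, log |F.eval z.1 - F.eval z.2| ∂ν.prod ν
      = ∫ z, (log |z.1 - z.2| + log (dq F z.1 z.2)) ∂ν.prod ν := by
        refine integral_congr_ae ?_
        filter_upwards [ae_fst_ne_snd] with z hz
        exact log_abs_eval_sub_eval F hz (dq_pos hF _ _).ne'
    _ = ∫ z, log |z.1 - z.2| ∂ν.prod ν + ∫ z, log (dq F z.1 z.2) ∂ν.prod ν :=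
        integral_add hlog hlogdq
    _ ≤ _ := add_le_add le_rfl <|
        integral_mono hlogdq ((integrable_dq hI F).sub (integrable_const 1))
          fun z => Real.log_le_sub_one_of_pos (dq_pos hF _ _)

/-- Monotone transformations increase the relative free entropy (one-dimensional form):
if `ν` is the free Gibbs state with convex polynomial potential `V` and `F` is a
polynomial with `F' > 0` everywhere, then the relative free entropy of `F_*ν`
with respect to `V` is at least that of `ν`. -/
theorem monotone_transport_increases_relative_entropy
    (V : Polynomial ℝ) (hV : ConvexOn ℝ Set.univ (fun x => V.eval x))
    (ν : Measure ℝ) [IsProbabilityMeasure ν]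
    (hcpt : ∃ K : Set ℝ, IsCompact K ∧ ν Kᶜ = 0)
    (hlog : Integrable (fun z : ℝ × ℝ => abs (Real.log |z.1 - z.2|)) (ν.prod ν))
    (hGibbs : ∀ p : Polynomial ℝ,
      ∫ x, (Polynomial.derivative V).eval x * p.eval x ∂ν
        = ∫ z : ℝ × ℝ, dq p z.1 z.2 ∂(ν.prod ν))
    (F : Polynomial ℝ) (hF : ∀ x : ℝ, 0 < (Polynomial.derivative F).eval x) :
    (∫ x, V.eval x ∂ν) - (∫ z : ℝ × ℝ, Real.log |z.1 - z.2| ∂(ν.prod ν))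
      ≤ (∫ x, V.eval (F.eval x) ∂ν)
          - (∫ z : ℝ × ℝ, Real.log |F.eval z.1 - F.eval z.2| ∂(ν.prod ν)) := by
  obtain ⟨K, hK, hKν⟩ := hcpt
  obtain ⟨lo, hlo⟩ := hK.bddBelow
  obtain ⟨hi, hhi⟩ := hK.bddAbove
  have hI : ∀ᵐ x ∂ν, x ∈ Icc lo hi :=
    ae_iff.2 (measure_mono_null (fun x hx hxK => hx ⟨hlo hxK, hhi hxK⟩) hKν)
  have := IsFreeGibbsState.nullSingletonClass hGibbs hI
  have hlog' : Integrable (fun z : ℝ × ℝ => log |z.1 - z.2|) (ν.prod ν) :=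
    (integrable_norm_iff
      (continuous_fst.sub continuous_snd).abs.measurable.log.aestronglyMeasurable).1 hlog
  have hGibbsF : ∫ z, (dq F z.1 z.2 - 1) ∂ν.prod ν
      = ∫ x, V.derivative.eval x * (F.eval x - x) ∂ν := by
    have h := (hGibbs (F - X)).symm
    simp only [dq_sub, dq_X, eval_sub, eval_X] at h
    exact h
  have hconv : ∫ x, V.derivative.eval x * (F.eval x - x) ∂ν
      ≤ ∫ x, V.eval (F.eval x) ∂ν - ∫ x, V.eval x ∂ν := by
    have hVF : Continuous fun x => V.eval (F.eval x) := by fun_prop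
    rw [← integral_sub (hVF.integrable_of_ae_mem_Icc hI) (V.continuous.integrable_of_ae_mem_Icc hI)]
    refine integral_mono ((by fun_prop : Continuous _).integrable_of_ae_mem_Icc hI)
      ((by fun_prop : Continuous _).integrable_of_ae_mem_Icc hI) fun x => ?_
    simpa [Polynomial.deriv] using hV.deriv_mul_sub_le (mem_univ x) (mem_univ _) V.differentiableAt
  linarith [integral_log_abs_sub_eval_le hI hF hlog']
end
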